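/- The vertex set of Γ_E(R) is infinite if and only if there is an associated prime ann(x) maximal in F = {ann(z) : 0 ≠ z ∈ R} such that the vertex [x] has infinite degree in Γ_E(R). -/

import Mathlib

open scoped Classical

noncomputable section

/-- The annihilator ideal of an element `x` of a commutative ring `R`. -/
def ann (R : Type*) [CommRing R] (x : R) : Ideal R := Ideal.torsionOf R R x

/-- The type of nonzero zero divisors of `R`. -/
def ZD (R : Type*) [CommRing R] : Type _ :=
  {x : R // x ≠ 0 ∧ ∃ y : R, y ≠ 0 ∧ x * y = 0}

/-- Two zero divisors are equivalent iff they have the same annihilator. -/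
instance annSetoid (R : Type*) [CommRing R] : Setoid (ZD R) :=
  ⟨fun a b => ann R a.1 = ann R b.1,
   fun _ => rfl, Eq.symm, Eq.trans⟩

/-- The vertex set of `Γ_E(R)`: equivalence classes of nonzero zero divisors. -/
def GammaEV (R : Type*) [CommRing R] : Type _ := Quotient (annSetoid R)

/-- The class of a nonzero zero divisor. -/
def cls (R : Type*) [CommRing R] (a : ZD R) : GammaEV R :=
  Quotient.mk (annSetoid R) a

/-- The graph `Γ_E(R)` of equivalence classes of zero divisors. -/
def gammaE (R : Type*) [CommRing R] : SimpleGraph (GammaEV R) where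
  Adj u v := u ≠ v ∧ ∃ a b : ZD R, cls R a = u ∧ cls R b = v ∧ a.1 * b.1 = 0
  symm := ⟨by
    rintro u v ⟨huv, a, b, ha, hb, hab⟩
    exact ⟨huv.symm, b, a, hb, ha, by rwa [mul_comm] at hab⟩⟩
  loopless := ⟨by rintro u ⟨h, -⟩; exact h rfl⟩

/-- `I` is a maximal element of the family `F = {ann x : 0 ≠ x ∈ R}`. -/
def MaxAnn (R : Type*) [CommRing R] (I : Ideal R) : Prop :=
  (∃ x : R, x ≠ 0 ∧ I = ann R x) ∧
    ∀ y : R, y ≠ 0 → I ≤ ann R y → I = ann R y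


/-
A maximal member of `{ann z : z ≠ 0}` is prime, hence an associated prime of `R`, so there are
only finitely many of them. By Noetherianity every annihilator lies in a maximal one; so if
`Γ_E(R)` has infinitely many vertices, pigeonhole gives a maximal annihilator `ann x` containing
the representatives of infinitely many classes, and all these classes are adjacent to `[x]`.
-/

open Set

section

variable {R : Type*} [CommRing R]

lemma mem_ann_iff {x a : R} : a ∈ ann R x ↔ a * x = 0 := by
  simp only [ann, Ideal.mem_torsionOf_iff, smul_eq_mul]

lemma ann_le_ann_mul (x y : R) : ann R x ≤ ann R (x * y) := fun a ha => by
  rw [mem_ann_iff] at ha ⊢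
  rw [← mul_assoc, ha, zero_mul]

lemma ann_eq_colon_bot (x : R) : ann R x = (⊥ : Submodule R R).colon {x} := by
  ext a
  rw [mem_ann_iff, Submodule.mem_colon_singleton, Submodule.mem_bot, smul_eq_mul]

namespace MaxAnn

lemma isPrime {I : Ideal R} (h : MaxAnn R I) : I.IsPrime := by
  obtain ⟨⟨x, hx0, rfl⟩, hmax⟩ := h
  refine ⟨fun htop => hx0 ?_, fun {a b} hab => ?_⟩
  · simpa using mem_ann_iff.mp (htop ▸ Submodule.mem_top : (1 : R) ∈ ann R x)
  · by_cases hax : a * x = 0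
    · exact Or.inl (mem_ann_iff.mpr hax)
    · -- `ann x ≤ ann (x a)` is an equality by maximality, and `b` kills `x a`
      rw [hmax (x * a) (by rwa [mul_comm]) (ann_le_ann_mul x a)]
      right
      rw [mem_ann_iff] at hab ⊢
      linear_combination hab

lemma isAssociatedPrime {I : Ideal R} (h : MaxAnn R I) : IsAssociatedPrime I R := by
  obtain ⟨x, -, rfl⟩ := h.1
  exact ⟨h.isPrime, x, by rw [← ann_eq_colon_bot, h.isPrime.radical]⟩

end MaxAnn

variable [IsNoetherianRing R]

lemma finite_setOf_maxAnn : {I : Ideal R | MaxAnn R I}.Finite :=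
  (associatedPrimes.finite R R).subset fun _ h => MaxAnn.isAssociatedPrime h

lemma exists_maxAnn_le {x : R} (hx : x ≠ 0) : ∃ I, MaxAnn R I ∧ ann R x ≤ I := by
  obtain ⟨_, ⟨y, hy0, rfl, hle⟩, hI⟩ := set_has_maximal_iff_noetherian.mpr inferInstance
    {J : Ideal R | ∃ y, y ≠ 0 ∧ J = ann R y ∧ ann R x ≤ J} ⟨ann R x, x, hx, rfl, le_rfl⟩
  refine ⟨ann R y, ⟨⟨y, hy0, rfl⟩, fun z hz0 hyz => ?_⟩, hle⟩
  exact hyz.eq_of_not_lt (hI _ ⟨z, hz0, rfl, hle.trans hyz⟩)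

lemma ZD.exists_maxAnn_mem (z : ZD R) : ∃ I, MaxAnn R I ∧ z.1 ∈ I := by
  obtain ⟨-, w, hw0, hzw⟩ := z.2
  obtain ⟨I, hI, hle⟩ := exists_maxAnn_le hw0
  exact ⟨I, hI, hle (mem_ann_iff.mpr hzw)⟩

end

lemma exists_maxAnn_infinite_neighborSet (R : Type*) [CommRing R] [IsNoetherianRing R]
    [Infinite (GammaEV R)] :
    ∃ a : ZD R, MaxAnn R (ann R a.1) ∧ ((gammaE R).neighborSet (cls R a)).Infinite := by
  have : Finite {I : Ideal R | MaxAnn R I} := finite_setOf_maxAnn.to_subtype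
  choose f hf using fun v : GammaEV R => (v.out : ZD R).exists_maxAnn_mem
  obtain ⟨⟨_, hp⟩, hfiber⟩ :=
    Finite.exists_infinite_fiber fun v => (⟨f v, (hf v).1⟩ : {I : Ideal R | MaxAnn R I})
  obtain ⟨x, hx0, rfl⟩ := hp.1
  have hS : {v : GammaEV R | x * (v.out : ZD R).1 = 0}.Infinite := by
    refine (infinite_coe_iff.mp hfiber).mono fun v hv => ?_
    have hv : f v = ann R x := congrArg Subtype.val hv
    rw [mem_ofPred_eq, mul_comm, ← mem_ann_iff, ← hv]
    exact (hf v).2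
  obtain ⟨v₀, hv₀⟩ := hS.nonempty
  let a : ZD R := ⟨x, hx0, _, (v₀.out : ZD R).2.1, hv₀⟩
  refine ⟨a, hp, (hS.sdiff (finite_singleton (cls R a))).mono ?_⟩
  rintro v ⟨hv, hva⟩
  exact ⟨Ne.symm hva, a, v.out, rfl, Quotient.out_eq v, hv⟩

theorem stmt10 (R : Type*) [CommRing R] [IsNoetherianRing R] :
    Infinite (GammaEV R) ↔
      ∃ a : ZD R, (ann R a.1).IsPrime ∧ MaxAnn R (ann R a.1) ∧
        ((gammaE R).neighborSet (cls R a)).Infinite := by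
  constructor
  · intro _
    obtain ⟨a, ha, hinf⟩ := exists_maxAnn_infinite_neighborSet R
    exact ⟨a, ha.isPrime, ha, hinf⟩
  · rintro ⟨a, -, -, hinf⟩
    exact infinite_univ_iff.mp (hinf.mono (subset_univ _))
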